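/- Commuting projector refinement of the trace bound: Let L be subunitary on 𝒜⊗ℬ and P a projector on 𝒜 with (P⊗I_ℬ)L = L(P⊗I_ℬ). If π⁰,…,π^{T−1} ⪰ 0 satisfy tr_ℬ(π^{j+1}) = tr_ℬ(L π^j L†) for all j, then tr((P⊗I_ℬ) π^{j+1}) ≤ tr((P⊗I_ℬ) π^j) for all j, and hence tr((P⊗I_ℬ) Σ_j π^j) ≤ T · tr((P⊗I_ℬ) π⁰). -/

import Mathlib

open Matrix Kronecker Finset

open scoped ComplexOrder

/-- `L` is subunitary: `‖Lφ‖ ≤ ‖φ‖` for all vectors `φ`. -/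
noncomputable def Subunitary {n : Type*} [Fintype n] [DecidableEq n] (L : Matrix n n ℂ) : Prop :=
  ∀ φ : EuclideanSpace ℂ n, ‖Matrix.toEuclideanLin L φ‖ ≤ ‖φ‖

/-- Partial trace over the second factor `B`. -/
noncomputable def ptraceB {A B : Type*} [Fintype B] (M : Matrix (A × B) (A × B) ℂ) :
    Matrix A A ℂ :=
  Matrix.of fun i j => ∑ b : B, M (i, b) (j, b)

/-- Partial trace over the factors `B` and `C`. -/
noncomputable def ptraceBC {A B C : Type*} [Fintype B] [Fintype C]
    (M : Matrix ((A × B) × C) ((A × B) × C) ℂ) : Matrix A A ℂ :=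
  Matrix.of fun i j => ∑ b : B, ∑ c : C, M ((i, b), c) ((j, b), c)

/-- Partial trace over the second factor `C`. -/
noncomputable def ptraceC {H C : Type*} [Fintype C] (M : Matrix (H × C) (H × C) ℂ) :
    Matrix H H ℂ :=
  Matrix.of fun i j => ∑ c : C, M (i, c) (j, c)

/-! `Q = P ⊗ I` is a self-adjoint idempotent commuting with `L`, so
`tr(Q L π Lᴴ) = tr(L (Q π Q) Lᴴ)`, and subunitarity (`1 - Lᴴ L ⪰ 0`) bounds this by
`tr(Q π Q) = tr(Q π)`. As `tr(Q σ) = tr(P tr_ℬ σ)` sees `σ` only through its partial trace, the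
recursion turns this into `tr(Q π^{j+1}) ≤ tr(Q π^j)`, and a decreasing sequence of `T` terms
sums to at most `T` times its first term. -/

namespace Matrix

lemma PosSemidef.trace_mul_nonneg {n 𝕜 : Type*} [Fintype n] [DecidableEq n] [RCLike 𝕜]
    {M N : Matrix n n 𝕜} (hM : M.PosSemidef) (hN : N.PosSemidef) : 0 ≤ (M * N).trace := by
  obtain ⟨B, rfl⟩ : ∃ B : Matrix n n 𝕜, M = Bᴴ * B := by
    open scoped MatrixOrder in exact CStarAlgebra.nonneg_iff_eq_star_mul_self.mp hM.nonneg
  rw [Matrix.mul_assoc, trace_mul_comm]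
  exact (hN.mul_mul_conjTranspose_same B).trace_nonneg

lemma trace_mul_eq_trace_mul_mul_of_isIdempotentElem {n R : Type*} [Fintype n] [CommSemiring R]
    {Q σ : Matrix n n R} (hQ : IsIdempotentElem Q) : (Q * σ).trace = (Q * σ * Q).trace :=
  calc (Q * σ).trace = (Q * Q * σ).trace := by rw [hQ.eq]
    _ = (Q * σ * Q).trace := by rw [Matrix.mul_assoc, trace_mul_comm]

lemma trace_kronecker_one_mul {A B : Type*} [Fintype A] [Fintype B] [DecidableEq B]
    (P : Matrix A A ℂ) (M : Matrix (A × B) (A × B) ℂ) :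
    ((P ⊗ₖ (1 : Matrix B B ℂ)) * M).trace = (P * ptraceB M).trace := by
  simp only [trace, diag, mul_apply, ptraceB, of_apply, Fintype.sum_prod_type, kroneckerMap_apply,
    one_apply, mul_ite, mul_one, mul_zero, ite_mul, zero_mul, Finset.sum_ite_eq, Finset.mem_univ,
    if_true, Finset.mul_sum]
  exact Finset.sum_congr rfl fun a _ => Finset.sum_comm

end Matrix

section Subunitary

variable {n : Type*} [Fintype n] [DecidableEq n]

lemma Subunitary.posSemidef_one_sub_conjTranspose_mul {L : Matrix n n ℂ} (hL : Subunitary L) :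
    (1 - Lᴴ * L).PosSemidef := by
  rw [← isPositive_toEuclideanLin_iff]
  refine ⟨isSymmetric_toEuclideanLin_iff.2 (by simp [IsHermitian]), fun x => ?_⟩
  have h : (1 - Lᴴ * L).toEuclideanLin x = x - Lᴴ.toEuclideanLin (L.toEuclideanLin x) := by
    ext i; simp [mulVec_mulVec]
  rw [h, inner_sub_left, toEuclideanLin_conjTranspose_eq_adjoint, LinearMap.adjoint_inner_left]
  simp only [map_sub, inner_self_eq_norm_sq, sub_nonneg]
  exact pow_le_pow_left₀ (norm_nonneg _) (hL x) 2

lemma Subunitary.trace_mul_mul_conjTranspose_le {L σ : Matrix n n ℂ} (hL : Subunitary L)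
    (hσ : σ.PosSemidef) : (L * σ * Lᴴ).trace ≤ σ.trace := by
  have h : σ.trace - (L * σ * Lᴴ).trace = ((1 - Lᴴ * L) * σ).trace := by
    rw [Matrix.sub_mul, Matrix.one_mul, trace_sub, trace_mul_comm _ Lᴴ, Matrix.mul_assoc Lᴴ]
  exact sub_nonneg.mp (h ▸ hL.posSemidef_one_sub_conjTranspose_mul.trace_mul_nonneg hσ)

lemma Subunitary.trace_starProjection_mul_conj_le {L Q σ : Matrix n n ℂ} (hL : Subunitary L)
    (hQ : IsStarProjection Q) (hQL : Commute Q L) (hσ : σ.PosSemidef) :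
    (Q * (L * σ * Lᴴ)).trace ≤ (Q * σ).trace := by
  have hLQ : Commute Lᴴ Q := by
    have h := hQL.star_star
    rw [hQ.isSelfAdjoint.star_eq] at h
    exact h.symm
  have hconj : Q * (L * σ * Lᴴ) * Q = L * (Q * σ * Q) * Lᴴ :=
    calc Q * (L * σ * Lᴴ) * Q = Q * L * σ * (Lᴴ * Q) := by simp only [Matrix.mul_assoc]
      _ = L * Q * σ * (Q * Lᴴ) := by rw [hQL.eq, hLQ.eq]
      _ = L * (Q * σ * Q) * Lᴴ := by simp only [Matrix.mul_assoc]
  have hτ : (Q * σ * Q).PosSemidef := by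
    simpa only [show Qᴴ = Q from hQ.isSelfAdjoint] using hσ.mul_mul_conjTranspose_same Q
  rw [trace_mul_eq_trace_mul_mul_of_isIdempotentElem hQ.isIdempotentElem, hconj,
    trace_mul_eq_trace_mul_mul_of_isIdempotentElem hQ.isIdempotentElem]
  exact hL.trace_mul_mul_conjTranspose_le hτ

end Subunitary

lemma IsStarProjection.kronecker_one {A B R : Type*} [Fintype A] [Fintype B] [DecidableEq B]
    [CommSemiring R] [StarRing R] {P : Matrix A A R} (hP : IsStarProjection P) :
    IsStarProjection (P ⊗ₖ (1 : Matrix B B R)) where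
  isIdempotentElem := by
    rw [IsIdempotentElem, ← mul_kronecker_mul, hP.isIdempotentElem.eq, Matrix.one_mul]
  isSelfAdjoint := by
    rw [IsSelfAdjoint, star_eq_conjTranspose, conjTranspose_kronecker, conjTranspose_one,
      ← star_eq_conjTranspose, hP.isSelfAdjoint.star_eq]

lemma Finset.sum_range_le_nsmul_of_succ_le {α : Type*} [AddCommMonoid α] [PartialOrder α]
    [IsOrderedAddMonoid α] {f : ℕ → α} {T : ℕ} (h : ∀ j, j + 1 < T → f (j + 1) ≤ f j) :
    ∑ j ∈ range T, f j ≤ T • f 0 := by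
  have hle : ∀ j < T, f j ≤ f 0 := by
    intro j
    induction j with
    | zero => exact fun _ => le_rfl
    | succ k ih => exact fun hk => (h k hk).trans (ih (by omega))
  simpa using Finset.sum_le_card_nsmul _ _ _ fun j hj => hle j (mem_range.mp hj)

theorem stmt12_general {A B : Type*} [Fintype A] [Fintype B] [DecidableEq A] [DecidableEq B]
    (L : Matrix (A × B) (A × B) ℂ) (hL : Subunitary L)
    (P : Matrix A A ℂ) (hP : Pᴴ = P) (hP2 : P * P = P)
    (hcomm : (P ⊗ₖ (1 : Matrix B B ℂ)) * L = L * (P ⊗ₖ (1 : Matrix B B ℂ)))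
    (T : ℕ) (π : ℕ → Matrix (A × B) (A × B) ℂ)
    (hpsd : ∀ j < T, (π j).PosSemidef)
    (hrec : ∀ j, j + 1 < T → ptraceB (π (j + 1)) = ptraceB (L * π j * Lᴴ)) :
    (∀ j, j + 1 < T →
      ((P ⊗ₖ (1 : Matrix B B ℂ)) * π (j + 1)).trace ≤
        ((P ⊗ₖ (1 : Matrix B B ℂ)) * π j).trace) ∧
      ((P ⊗ₖ (1 : Matrix B B ℂ)) * ∑ j ∈ Finset.range T, π j).trace ≤
        (T : ℂ) * ((P ⊗ₖ (1 : Matrix B B ℂ)) * π 0).trace := by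
  have hQ : IsStarProjection (P ⊗ₖ (1 : Matrix B B ℂ)) :=
    IsStarProjection.kronecker_one ⟨hP2, hP⟩
  have hmono : ∀ j, j + 1 < T →
      ((P ⊗ₖ (1 : Matrix B B ℂ)) * π (j + 1)).trace ≤
        ((P ⊗ₖ (1 : Matrix B B ℂ)) * π j).trace := by
    intro j hj
    rw [trace_kronecker_one_mul, hrec j hj, ← trace_kronecker_one_mul]
    exact hL.trace_starProjection_mul_conj_le hQ hcomm (hpsd j (by omega))
  refine ⟨hmono, ?_⟩
  rw [Finset.mul_sum, trace_sum, ← nsmul_eq_mul]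
  exact Finset.sum_range_le_nsmul_of_succ_le hmono

/-- Commuting projector refinement of the trace bound. -/
theorem stmt12 {A B : Type*} [Fintype A] [Fintype B] [DecidableEq A] [DecidableEq B]
    (L : Matrix (A × B) (A × B) ℂ) (hL : Subunitary L)
    (P : Matrix A A ℂ) (hP : Pᴴ = P) (hP2 : P * P = P)
    (hcomm : (P ⊗ₖ (1 : Matrix B B ℂ)) * L = L * (P ⊗ₖ (1 : Matrix B B ℂ)))
    (T : ℕ) (hT : 0 < T) (π : ℕ → Matrix (A × B) (A × B) ℂ)
    (hpsd : ∀ j < T, (π j).PosSemidef)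
    (hrec : ∀ j, j + 1 < T → ptraceB (π (j + 1)) = ptraceB (L * π j * Lᴴ)) :
    (∀ j, j + 1 < T →
      ((P ⊗ₖ (1 : Matrix B B ℂ)) * π (j + 1)).trace ≤
        ((P ⊗ₖ (1 : Matrix B B ℂ)) * π j).trace) ∧
      ((P ⊗ₖ (1 : Matrix B B ℂ)) * ∑ j ∈ Finset.range T, π j).trace ≤
        (T : ℂ) * ((P ⊗ₖ (1 : Matrix B B ℂ)) * π 0).trace :=
  stmt12_general L hL P hP hP2 hcomm T π hpsd hrec
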